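/- If A is a binary assertion, then the combinable wand and the standard wand coincide: σ_w ⊨ A -*c B if and only if σ_w ⊨ A -* B, for every state σ_w and intuitionistic assertion B. -/

import Mathlib

/-- A state of the fractional-permission model: a permission mask
`pi : L → ℚ` (with values in `[0,1]`) and a partial heap `hp : L → Option V`,
subject to the validity condition that positive permission implies a defined value. -/
structure FState (L V : Type) where
  pi : L → ℚ
  hp : L → Option V
  nonneg : ∀ l, 0 ≤ pi l
  le_one : ∀ l, pi l ≤ 1
  valid : ∀ l, 0 < pi l → (hp l).isSome

/-- Compatibility: heaps agree on the common domain and permissions sum to at most 1. -/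
def compat {L V : Type} (s1 s2 : FState L V) : Prop :=
  (∀ l v1 v2, s1.hp l = some v1 → s2.hp l = some v2 → v1 = v2) ∧
  (∀ l, s1.pi l + s2.pi l ≤ 1)

/-- Union of partial heaps. -/
def hunion {V : Type} (o1 o2 : Option V) : Option V :=
  match o1 with
  | some v => some v
  | none => o2

open Classical in
/-- Partial addition of states. -/
noncomputable def fadd {L V : Type} (s1 s2 : FState L V) : Option (FState L V) :=
  if h : compat s1 s2 then
    some { pi := fun l => s1.pi l + s2.pi l,
           hp := fun l => hunion (s1.hp l) (s2.hp l),
           nonneg := fun l => add_nonneg (s1.nonneg l) (s2.nonneg l),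
           le_one := fun l => h.2 l,
           valid := by
             intro l hl
             have hl' : 0 < s1.pi l + s2.pi l := hl
             rcases h1 : s1.hp l with _ | v
             · have h2 : 0 < s2.pi l := by
                 by_contra hc
                 push_neg at hc
                 have hpos : 0 < s1.pi l := by
                   have := s2.nonneg l
                   linarith
                 have := s1.valid l hpos
                 rw [h1] at this
                 simp at this
               have h2' := s2.valid l h2
               simp only [hunion, h1]
               exact h2'
             · simp [hunion, h1] }
  else none

/-- `t` is the state `s` with all permissions multiplied by `α` (same heap). -/
def isSmul {L V : Type} (α : ℚ) (s t : FState L V) : Prop :=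
  (∀ l, t.pi l = α * s.pi l) ∧ t.hp = s.hp

/-- Separating conjunction. -/
def satStar {L V : Type} (A B : FState L V → Prop) (σ : FState L V) : Prop :=
  ∃ σ1 σ2, fadd σ1 σ2 = some σ ∧ A σ1 ∧ B σ2

/-- Fractional assertion `A^p`. -/
def fracSat {L V : Type} (p : ℚ) (A : FState L V → Prop) (σ : FState L V) : Prop :=
  ∃ σ', A σ' ∧ isSmul p σ' σ

/-- Standard magic wand. -/
def satWand {L V : Type} (A B : FState L V → Prop) (σw : FState L V) : Prop :=
  ∀ σA σ, A σA → fadd σA σw = some σ → B σ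

/-- Order induced by ⊕. -/
def fgeq {L V : Type} (σ2 σ1 : FState L V) : Prop :=
  ∃ r, fadd σ1 r = some σ2

/-- `B` is intuitionistic: closed under state extension. -/
def intuit {L V : Type} (B : FState L V → Prop) : Prop :=
  ∀ σ σ' r, B σ → fadd σ r = some σ' → B σ'

/-- `A` is combinable: `A^p * A^q ⊨ A^{p+q}`. -/
def combinable {L V : Type} (A : FState L V → Prop) : Prop :=
  ∀ p q : ℚ, 0 < p → 0 < q → p + q ≤ 1 →
    ∀ σ, satStar (fracSat p A) (fracSat q A) σ → fracSat (p + q) A σ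

/-- Some scaling of `σw` (by `0 < α ≤ 1`) is compatible with `σA`. -/
def scaledCompat {L V : Type} (σA σw : FState L V) : Prop :=
  ∃ α t, 0 < α ∧ α ≤ 1 ∧ isSmul α σw t ∧ compat σA t

/-- Truncation of `σw` so that it fits next to `σA`. -/
def trunc {L V : Type} (sA sw : FState L V) : FState L V :=
  { pi := fun l => min (sw.pi l) (1 - sA.pi l),
    hp := sw.hp,
    nonneg := fun l => le_min (sw.nonneg l) (by linarith [sA.le_one l]),
    le_one := fun l => le_trans (min_le_left _ _) (sw.le_one l),
    valid := fun l hl => sw.valid l (lt_of_lt_of_le hl (min_le_left _ _)) }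

open Classical in
/-- The transformation `R(σA, σw)` used in the definition of combinable wands. -/
noncomputable def Rtrans {L V : Type} (σA σw : FState L V) : FState L V :=
  if scaledCompat σA σw then trunc σA σw else σw

/-- Combinable magic wand `A -*c B`. -/
def satCWand {L V : Type} (A B : FState L V → Prop) (σw : FState L V) : Prop :=
  ∀ σA σ, A σA → fadd σA (Rtrans σA σw) = some σ → B σ

/-- A stable state: positive permission iff the heap value is defined. -/
def fstable {L V : Type} (σ : FState L V) : Prop :=
  ∀ l, 0 < σ.pi l ↔ (σ.hp l).isSome

open Classical in
/-- The state with permission `q` and value `v` at the single location `l0`. -/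
noncomputable def single {L V : Type} (l0 : L) (v : V) (q : ℚ)
    (h0 : 0 ≤ q) (h1 : q ≤ 1) : FState L V :=
  { pi := fun l => if l = l0 then q else 0,
    hp := fun l => if l = l0 then some v else none,
    nonneg := by intro l; by_cases h : l = l0 <;> simp [h, h0]
    le_one := by intro l; by_cases h : l = l0 <;> simp [h, h1]
    valid := by
      intro l hl
      by_cases h : l = l0 <;> simp [h] at hl ⊢ }

/-- The binary restriction of a state. -/
noncomputable def binState {L V : Type} (σ : FState L V) : FState L V :=
  { pi := fun l => if σ.pi l = 1 then 1 else 0,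
    hp := σ.hp,
    nonneg := by intro l; show 0 ≤ if σ.pi l = 1 then (1:ℚ) else 0; split <;> norm_num,
    le_one := by intro l; show (if σ.pi l = 1 then (1:ℚ) else 0) ≤ 1; split <;> norm_num,
    valid := by
      intro l hl
      have hl' : 0 < if σ.pi l = 1 then (1:ℚ) else 0 := hl
      split at hl'
      · next h => exact σ.valid l (by rw [h]; norm_num)
      · simp at hl' }

/-- `A` is a binary assertion. -/
def binaryAssertion {L V : Type} (A : FState L V → Prop) : Prop :=
  ∀ σ, A σ → A (binState σ)

/-- Heaps agree on the common domain. -/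
def heapCompat {L V : Type} (s1 s2 : FState L V) : Prop :=
  ∀ l v1 v2, s1.hp l = some v1 → s2.hp l = some v2 → v1 = v2

/-!
If `σA # σw`, the scaling `α = 1` is compatible and the truncation leaves `σw` unchanged, so
`R(σA, σw) = σw` and the combinable wand implies the standard one. Conversely, if some positive
scaling of `σw` fits next to `σA`, then `σw` has no permission where `σA` has full permission,
so `bin(σA) # σw`. Since `A` is binary, the standard wand gives `B` at `bin(σA) ⊕ σw`, which lies
below `σA ⊕ R(σA, σw)` in the order of `⊕`; since `B` is intuitionistic it holds there as well.
If no scaling fits, `R(σA, σw) = σw` and the two wands agree outright.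
-/

section

variable {L V : Type}

@[ext]
theorem FState.ext {s t : FState L V} (hpi : s.pi = t.pi) (hhp : s.hp = t.hp) : s = t := by
  cases s; cases t; simp_all

theorem compat_of_fadd_eq_some {s1 s2 σ : FState L V} (h : fadd s1 s2 = some σ) :
    compat s1 s2 := by
  by_contra hc
  simp [fadd, hc] at h

theorem fadd_eq_some_pi {s1 s2 σ : FState L V} (h : fadd s1 s2 = some σ) (l : L) :
    σ.pi l = s1.pi l + s2.pi l := by
  rw [fadd, dif_pos (compat_of_fadd_eq_some h)] at h
  rw [← Option.some.inj h]

theorem fadd_eq_some_hp {s1 s2 σ : FState L V} (h : fadd s1 s2 = some σ) (l : L) :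
    σ.hp l = hunion (s1.hp l) (s2.hp l) := by
  rw [fadd, dif_pos (compat_of_fadd_eq_some h)] at h
  rw [← Option.some.inj h]

theorem exists_fadd_eq_some {s1 s2 : FState L V} (h : compat s1 s2) :
    ∃ σ, fadd s1 s2 = some σ :=
  ⟨_, dif_pos h⟩

theorem hunion_of_subheap {o1 o2 : Option V} (h : ∀ v, o1 = some v → o2 = some v) :
    hunion o1 o2 = o2 := by
  cases o1 with
  | none => rfl
  | some v => exact (h v rfl).symm

theorem fgeq_of_le {s t : FState L V} (hpi : ∀ l, s.pi l ≤ t.pi l)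
    (hhp : ∀ l v, s.hp l = some v → t.hp l = some v) : fgeq t s := by
  -- the remainder carries the missing permissions and the whole heap of `t`
  let r : FState L V :=
    { pi := fun l => t.pi l - s.pi l
      hp := t.hp
      nonneg := fun l => sub_nonneg.mpr (hpi l)
      le_one := fun l => by linarith [t.le_one l, s.nonneg l]
      valid := fun l hl => t.valid l (by linarith [s.nonneg l, show 0 < t.pi l - s.pi l from hl]) }
  have hcompat : compat s r := by
    refine ⟨fun l v1 v2 h1 h2 => ?_, fun l => ?_⟩
    · rw [hhp l v1 h1] at h2
      exact Option.some.inj h2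
    · show s.pi l + (t.pi l - s.pi l) ≤ 1
      linarith [t.le_one l]
  obtain ⟨σ, hσ⟩ := exists_fadd_eq_some hcompat
  refine ⟨r, hσ.trans (congrArg some (FState.ext (funext fun l => ?_) (funext fun l => ?_)))⟩
  · rw [fadd_eq_some_pi hσ l]
    exact add_sub_cancel (s.pi l) _
  · rw [fadd_eq_some_hp hσ l]
    exact hunion_of_subheap (hhp l)

theorem intuit.mono {B : FState L V → Prop} (hB : intuit B) {σ σ' : FState L V}
    (hσ : B σ) (hle : fgeq σ' σ) : B σ' :=
  let ⟨r, hr⟩ := hle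
  hB σ σ' r hσ hr

theorem trunc_eq_self_of_compat {sA sw : FState L V} (h : compat sA sw) : trunc sA sw = sw := by
  ext l
  · exact min_eq_left (by linarith [h.2 l])
  · rfl

theorem Rtrans_eq_self_of_compat {σA σw : FState L V} (h : compat σA σw) :
    Rtrans σA σw = σw := by
  have hsc : scaledCompat σA σw := ⟨1, σw, one_pos, le_rfl, ⟨fun l => (one_mul _).symm, rfl⟩, h⟩
  rw [Rtrans, if_pos hsc, trunc_eq_self_of_compat h]

theorem scaledCompat.pi_eq_zero {σA σw : FState L V} (h : scaledCompat σA σw) {l : L}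
    (hl : σA.pi l = 1) : σw.pi l = 0 := by
  obtain ⟨α, t, hα, -, ⟨htpi, -⟩, hcompat⟩ := h
  have hαw : α * σw.pi l ≤ 0 := by linarith [hcompat.2 l, htpi l]
  exact (mul_eq_zero.mp (le_antisymm hαw (mul_nonneg hα.le (σw.nonneg l)))).resolve_left hα.ne'

theorem scaledCompat.compat_binState {σA σw : FState L V} (h : scaledCompat σA σw) :
    compat (binState σA) σw := by
  refine ⟨fun l v1 v2 h1 h2 => ?_, fun l => ?_⟩
  · obtain ⟨α, t, -, -, ⟨-, hthp⟩, hcompat⟩ := h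
    exact hcompat.1 l v1 v2 h1 (hthp ▸ h2)
  · show (if σA.pi l = 1 then (1 : ℚ) else 0) + σw.pi l ≤ 1
    split_ifs with hl
    · rw [h.pi_eq_zero hl, add_zero]
    · rw [zero_add]
      exact σw.le_one l

theorem scaledCompat.fgeq_fadd_binState {σA σw σ σ' : FState L V} (h : scaledCompat σA σw)
    (hσ : fadd σA (trunc σA σw) = some σ) (hσ' : fadd (binState σA) σw = some σ') :
    fgeq σ σ' := by
  refine fgeq_of_le (fun l => ?_) (fun l v hv => ?_)
  · rw [fadd_eq_some_pi hσ, fadd_eq_some_pi hσ']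
    show (if σA.pi l = 1 then (1 : ℚ) else 0) + σw.pi l ≤ σA.pi l + min (σw.pi l) (1 - σA.pi l)
    split_ifs with hl
    · simp [hl, h.pi_eq_zero hl]
    · rcases le_total (σw.pi l) (1 - σA.pi l) with hle | hle
      · rw [min_eq_left hle]; linarith [σA.nonneg l]
      · rw [min_eq_right hle]; linarith [σw.le_one l]
  · rw [fadd_eq_some_hp hσ, ← hv, fadd_eq_some_hp hσ']
    rfl

end

/-- if `A` is a binary assertion and `B` is intuitionistic, the
combinable wand and the standard wand coincide. -/
theorem cwand_iff_wand_of_binary {L V : Type} (A B : FState L V → Prop)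
    (hA : binaryAssertion A) (hB : intuit B) (σw : FState L V) :
    satCWand A B σw ↔ satWand A B σw := by
  constructor
  · intro h σA σ hσA hσ
    exact h σA σ hσA (by rwa [Rtrans_eq_self_of_compat (compat_of_fadd_eq_some hσ)])
  · intro h σA σ hσA hσ
    by_cases hsc : scaledCompat σA σw
    · rw [Rtrans, if_pos hsc] at hσ
      obtain ⟨σ', hσ'⟩ := exists_fadd_eq_some hsc.compat_binState
      exact hB.mono (h _ σ' (hA σA hσA) hσ') (hsc.fgeq_fadd_binState hσ hσ')
    · rw [Rtrans, if_neg hsc] at hσ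
      exact h σA σ hσA hσ
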